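/- arXiv:1612.05506 — 2 statements merged into one kernel-verified Lean document; each statement's English description precedes it below -/
import Mathlib

section
/- Let W > 0, V > 0, q > 0, u > 0. The unique p* maximizing g(p) = q·p/(W p + V) − u·p over p ∈ [0,1] is: p* = 1 if q ≥ u(W+V)²/V; p* = (√(Vq/u) − V)/W if uV < q < u(W+V)²/V; and p* = 0 if q ≤ uV. In the middle regime, p* is characterized by the stationarity condition qV/(W p* + V)² = u. -/
open Set

/-!
Clearing denominators, `g a - g b` has the sign of `(a - b) * (q V - u (W a + V) (W b + V))`.
At `p = 1` and at `p = 0` the threshold conditions make the second factor positive,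
resp. negative, for every other point of `[0, 1]`. In the middle regime the candidate `a`
satisfies `q V = u (W a + V)²`, so the product collapses to `u W (W a + V) (a - b)²`.
In every case `g b < g a` for `b ≠ a`, which gives existence and uniqueness of the maximizer.
-/

theorem isMaxOn_and_eq_of_forall_lt {α β : Type*} [PartialOrder β] {f : α → β} {s : Set α}
    {a : α} (ha : a ∈ s) (hlt : ∀ x ∈ s, x ≠ a → f x < f a) :
    IsMaxOn f s a ∧ ∀ p ∈ s, IsMaxOn f s p → p = a := by
  have hmax : IsMaxOn f s a := fun x hx => by
    rcases eq_or_ne x a with rfl | hxa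
    · exact le_rfl
    · exact (hlt x hx hxa).le
  refine ⟨hmax, fun p hp hpmax => by_contra fun hpa => ?_⟩
  exact (hlt p hp hpa).not_ge (hpmax ha)

namespace Placement

noncomputable def gain (W V q u p : ℝ) : ℝ := q * p / (W * p + V) - u * p

variable {W V q u : ℝ}

theorem gain_sub_gain {a b : ℝ} (ha : W * a + V ≠ 0) (hb : W * b + V ≠ 0) :
    gain W V q u a - gain W V q u b =
      (a - b) * (q * V - u * ((W * a + V) * (W * b + V))) / ((W * a + V) * (W * b + V)) := by
  have ha' : a * W + V ≠ 0 := by rwa [mul_comm]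
  have hb' : b * W + V ≠ 0 := by rwa [mul_comm]
  unfold gain
  field_simp
  ring

theorem gain_lt_gain_iff {a b : ℝ} (ha : 0 < W * a + V) (hb : 0 < W * b + V) :
    gain W V q u b < gain W V q u a ↔
      0 < (a - b) * (q * V - u * ((W * a + V) * (W * b + V))) := by
  rw [← sub_pos, gain_sub_gain ha.ne' hb.ne', div_pos_iff_of_pos_right (mul_pos ha hb)]

theorem denom_pos (hW : 0 < W) (hV : 0 < V) {p : ℝ} (hp : p ∈ Icc (0 : ℝ) 1) :
    0 < W * p + V := by
  nlinarith [hp.1]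

theorem gain_lt_gain_one (hW : 0 < W) (hV : 0 < V) (hu : 0 < u)
    (hq : u * (W + V) ^ 2 ≤ q * V) {x : ℝ} (hx : x ∈ Icc (0 : ℝ) 1) (hx1 : x ≠ 1) :
    gain W V q u x < gain W V q u 1 := by
  have hlt : 0 < 1 - x := sub_pos.mpr (lt_of_le_of_ne hx.2 hx1)
  rw [gain_lt_gain_iff (denom_pos hW hV ⟨zero_le_one, le_rfl⟩) (denom_pos hW hV hx)]
  have hfactor : u * (W + V) * W * (1 - x) ≤ q * V - u * ((W * 1 + V) * (W * x + V)) := by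
    nlinarith
  have : 0 < u * (W + V) * W * (1 - x) := by positivity
  nlinarith

theorem gain_lt_gain_zero (hW : 0 < W) (hV : 0 < V) (hu : 0 < u) (hq : q ≤ u * V)
    {x : ℝ} (hx : x ∈ Icc (0 : ℝ) 1) (hx0 : x ≠ 0) :
    gain W V q u x < gain W V q u 0 := by
  have hpos : 0 < x := lt_of_le_of_ne hx.1 (Ne.symm hx0)
  rw [gain_lt_gain_iff (denom_pos hW hV ⟨le_rfl, zero_le_one⟩) (denom_pos hW hV hx)]
  have : 0 < u * V * W * x * x := by positivity
  nlinarith [mul_le_mul_of_nonneg_left hq (mul_nonneg hpos.le hV.le)]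

theorem gain_lt_gain_of_stationary (hW : 0 < W) {a x : ℝ} (hu : 0 < u) (ha : 0 < W * a + V)
    (hx : 0 < W * x + V) (hstat : q * V = u * (W * a + V) ^ 2) (hxa : x ≠ a) :
    gain W V q u x < gain W V q u a := by
  rw [gain_lt_gain_iff ha hx]
  have hsq : 0 < (a - x) ^ 2 := sq_pos_of_ne_zero (sub_ne_zero.mpr hxa.symm)
  calc 0 < u * W * (W * a + V) * (a - x) ^ 2 := by positivity
    _ = _ := by linear_combination (x - a) * hstat

noncomputable def stationaryPoint (W V q u : ℝ) : ℝ := (Real.sqrt (V * q / u) - V) / W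

theorem denom_stationaryPoint (hW : 0 < W) :
    W * stationaryPoint W V q u + V = Real.sqrt (V * q / u) := by
  unfold stationaryPoint
  field_simp
  ring

theorem stationaryPoint_mem_Icc (hW : 0 < W) (hV : 0 < V) (hu : 0 < u) (hlow : u * V < q)
    (hhigh : q < u * (W + V) ^ 2 / V) : stationaryPoint W V q u ∈ Icc (0 : ℝ) 1 := by
  have hlow' : V < Real.sqrt (V * q / u) :=
    Real.lt_sqrt_of_sq_lt (by rw [lt_div_iff₀ hu]; nlinarith)
  have hhigh' : Real.sqrt (V * q / u) < W + V := by
    rw [Real.sqrt_lt' (by linarith), div_lt_iff₀ hu]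
    nlinarith [(lt_div_iff₀ hV).mp hhigh]
  constructor
  · exact div_nonneg (by linarith) hW.le
  · rw [stationaryPoint, div_le_one hW]
    linarith

theorem stationaryPoint_stationary (hW : 0 < W) (hu : 0 < u) (hVq : 0 ≤ V * q) :
    q * V = u * (W * stationaryPoint W V q u + V) ^ 2 := by
  rw [denom_stationaryPoint hW, Real.sq_sqrt (div_nonneg hVq hu.le)]
  field_simp

end Placement

open Placement in
theorem stmt_6_general (W V q u : ℝ) (hW : 0 < W) (hV : 0 < V) (hu : 0 < u) :
    (q ≥ u * (W + V) ^ 2 / V →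
      IsMaxOn (fun p : ℝ => q * p / (W * p + V) - u * p) (Icc 0 1) 1 ∧
      ∀ p ∈ Icc (0 : ℝ) 1,
        IsMaxOn (fun p' : ℝ => q * p' / (W * p' + V) - u * p') (Icc 0 1) p → p = 1) ∧
    (u * V < q → q < u * (W + V) ^ 2 / V →
      IsMaxOn (fun p : ℝ => q * p / (W * p + V) - u * p) (Icc 0 1)
        ((Real.sqrt (V * q / u) - V) / W) ∧
      (∀ p ∈ Icc (0 : ℝ) 1,
        IsMaxOn (fun p' : ℝ => q * p' / (W * p' + V) - u * p') (Icc 0 1) p →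
          p = (Real.sqrt (V * q / u) - V) / W) ∧
      q * V / (W * ((Real.sqrt (V * q / u) - V) / W) + V) ^ 2 = u) ∧
    (q ≤ u * V →
      IsMaxOn (fun p : ℝ => q * p / (W * p + V) - u * p) (Icc 0 1) 0 ∧
      ∀ p ∈ Icc (0 : ℝ) 1,
        IsMaxOn (fun p' : ℝ => q * p' / (W * p' + V) - u * p') (Icc 0 1) p → p = 0) := by
  refine ⟨fun hhigh => ?_, fun hlow hhigh => ?_, fun hlow => ?_⟩
  · have hq : u * (W + V) ^ 2 ≤ q * V := (div_le_iff₀ hV).mp hhigh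
    exact isMaxOn_and_eq_of_forall_lt (f := gain W V q u) ⟨zero_le_one, le_rfl⟩
      fun x hx hx1 => gain_lt_gain_one hW hV hu hq hx hx1
  · have hs := stationaryPoint_mem_Icc hW hV hu hlow hhigh
    have hstat : q * V = u * (W * stationaryPoint W V q u + V) ^ 2 :=
      stationaryPoint_stationary hW hu (mul_nonneg hV.le (by nlinarith))
    obtain ⟨hmax, huniq⟩ := isMaxOn_and_eq_of_forall_lt (f := gain W V q u) hs
      fun x hx hxs => gain_lt_gain_of_stationary hW hu (denom_pos hW hV hs) (denom_pos hW hV hx)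
        hstat hxs
    refine ⟨hmax, huniq, ?_⟩
    exact (div_eq_iff (pow_pos (denom_pos hW hV hs) 2).ne').mpr hstat
  · exact isMaxOn_and_eq_of_forall_lt (f := gain W V q u) ⟨le_rfl, zero_le_one⟩
      fun x hx hx0 => gain_lt_gain_zero hW hV hu hlow hx hx0

/-- Per-file KKT solution (Theorem 2): the unique maximizer of
g(p) = q p/(W p + V) − u p over [0,1] is 1, (√(Vq/u) − V)/W, or 0 according to the
popularity thresholds, with stationarity qV/(W p* + V)² = u in the middle regime. -/
theorem stmt_6 (W V q u : ℝ) (hW : 0 < W) (hV : 0 < V) (hq : 0 < q) (hu : 0 < u) :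
    (q ≥ u * (W + V) ^ 2 / V →
      IsMaxOn (fun p : ℝ => q * p / (W * p + V) - u * p) (Icc 0 1) 1 ∧
      ∀ p ∈ Icc (0 : ℝ) 1,
        IsMaxOn (fun p' : ℝ => q * p' / (W * p' + V) - u * p') (Icc 0 1) p → p = 1) ∧
    (u * V < q → q < u * (W + V) ^ 2 / V →
      IsMaxOn (fun p : ℝ => q * p / (W * p + V) - u * p) (Icc 0 1)
        ((Real.sqrt (V * q / u) - V) / W) ∧
      (∀ p ∈ Icc (0 : ℝ) 1,
        IsMaxOn (fun p' : ℝ => q * p' / (W * p' + V) - u * p') (Icc 0 1) p →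
          p = (Real.sqrt (V * q / u) - V) / W) ∧
      q * V / (W * ((Real.sqrt (V * q / u) - V) / W) + V) ^ 2 = u) ∧
    (q ≤ u * V →
      IsMaxOn (fun p : ℝ => q * p / (W * p + V) - u * p) (Icc 0 1) 0 ∧
      ∀ p ∈ Icc (0 : ℝ) 1,
        IsMaxOn (fun p' : ℝ => q * p' / (W * p' + V) - u * p') (Icc 0 1) p → p = 0) :=
  stmt_6_general W V q u hW hV hu
end

section
/- In the interior (diversity) regime, the optimal placement probability is p_m* = (√V/(√u* W))·√(q_m) − V/W, i.e., p_m* is an affine, strictly increasing function of √(q_m); consequently, for two files with popularities q_m > q_n both in the interval (u*V, u*(W+V)²/V), we have p_m* > p_n* and p_m* − p_n* = (√V/(√u* W))·(√(q_m) − √(q_n)). -/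
open Set

/-- OPP structure (Remark 3): in the diversity regime the optimal placement probability
p* = (√V/(√u* W))·√q − V/W is an affine, strictly increasing function of √q, so for two
files with popularities q_m > q_n both in (u*V, u*(W+V)²/V) the probabilities satisfy
p_m* > p_n* with the stated difference. -/
theorem stmt_9 (W V u qm qn : ℝ) (hW : 0 < W) (hV : 0 < V) (hu : 0 < u)
    (hqn : u * V < qn) (hqmn : qn < qm) (hqm : qm < u * (W + V) ^ 2 / V) :
    (Real.sqrt V / (Real.sqrt u * W)) * Real.sqrt qm - V / W =
        (Real.sqrt (V * qm / u) - V) / W ∧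
    (Real.sqrt V / (Real.sqrt u * W)) * Real.sqrt qn - V / W <
        (Real.sqrt V / (Real.sqrt u * W)) * Real.sqrt qm - V / W ∧
    ((Real.sqrt V / (Real.sqrt u * W)) * Real.sqrt qm - V / W) -
        ((Real.sqrt V / (Real.sqrt u * W)) * Real.sqrt qn - V / W) =
      (Real.sqrt V / (Real.sqrt u * W)) * (Real.sqrt qm - Real.sqrt qn) := by
  have hqm0 : 0 ≤ qm := le_of_lt (lt_trans (lt_trans (by positivity) hqn) hqmn)
  have hsu : 0 < Real.sqrt u := Real.sqrt_pos.2 hu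
  refine ⟨?_, ?_, by ring⟩
  · have h1 : Real.sqrt (V * qm / u) = Real.sqrt V * Real.sqrt qm / Real.sqrt u := by
      rw [Real.sqrt_div (by positivity), Real.sqrt_mul hV.le]
    rw [h1]
    field_simp
  · have h : Real.sqrt qn < Real.sqrt qm :=
      Real.sqrt_lt_sqrt (le_of_lt (lt_trans (by positivity) hqn)) hqmn
    have hc : 0 < Real.sqrt V / (Real.sqrt u * W) := by positivity
    have := mul_lt_mul_of_pos_left h hc
    linarith
end
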